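/- arXiv:1404.7257 — 2 statements merged into one kernel-verified Lean document; each statement's English description precedes it below -/
import Mathlib

section
/- (Geometric alternative along the bottleneck path.) Let Λ = [1,L]^d, let η ∈ A_* and z ∈ Λ ∖ {v^*} satisfy c_z^{Λ,max}(η) = 1 and η^z ∉ A_*, and let z = u_0 ≪ u_1 ≪ … ≪ u_M = v^* (M ≥ 1) be points of Λ such that, with d_i = ‖u_{i−1} − u_i‖₁: 1 = d_1 < … < d_M < L and for each 1 ≤ i ≤ M one has Φ_ℓ(η)_{u_i} = Φ_ℓ(η^z)_{u_i} = 0 for ℓ < d_i, Φ_{d_i}(η)_{u_i} ≠ Φ_{d_i}(η^z)_{u_i}, and Φ_{d_i−1}(η)_{u_{i−1}} ≠ Φ_{d_i−1}(η^z)_{u_{i−1}}. Let B = ∏_{j=1}^d [a_j,b_j] be a box with: B ⊂ Λ ∪ ∂_E Λ; z ∈ B; z ≠ a := (a_1,…,a_d) and η_a = 0 (η extended by 0 on ∂_E Λ); and b := (b_1,…,b_d) = u_k for some 0 ≤ k ≤ M. Set ℓ = Σ_j (b_j − a_j), B⁻ = { x ∈ (Λ ∪ ∂_E Λ) ∖ B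 : x ≪ a and ‖x−a‖₁ < ℓ }, and B⁺ = { x ∈ (Λ ∪ ∂_E Λ) ∖ B : b ≪ x and ‖x−b‖₁ ≤ ℓ }. Then at least one of the following holds: (1) v^* ∈ B and B ∩ ∂_E Λ ≠ ∅; (2) a ∉ ∂_E Λ, B⁻ ≠ ∅ and η has a zero in B⁻; (3) k ≠ M and u_{k+1} ∈ B⁺. -/
open scoped BigOperators

namespace East

/-- Sites of the lattice `ℤ^d`. -/
abbrev Site (d : ℕ) := Fin d → ℤ

/-- The canonical basis vector `e_i` of `ℤ^d`. -/
def basis (d : ℕ) (i : Fin d) : Site d := fun j => if j = i then 1 else 0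

/-- Spin configurations on a finite box `Λ ⊂ ℤ^d`: `true` = particle, `false` = vacancy. -/
abbrev Cfg (d : ℕ) (Λ : Finset (Site d)) := {x // x ∈ Λ} → Bool

/-- The weight of a configuration under the product Bernoulli(`1-q`) measure `π_Λ`. -/
noncomputable def weight (d : ℕ) (q : ℝ) {Λ : Finset (Site d)} (η : Cfg d Λ) : ℝ :=
  ∏ x : {x // x ∈ Λ}, (if η x then 1 - q else q)

/-- Expectation with respect to `π_Λ`. -/
noncomputable def mean (d : ℕ) (q : ℝ) {Λ : Finset (Site d)} (f : Cfg d Λ → ℝ) : ℝ :=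
  ∑ η : Cfg d Λ, weight d q η * f η

/-- Conditional expectation of `f` with respect to the spins in `V`,
given the spins outside `V`. -/
noncomputable def condEx (d : ℕ) (q : ℝ) (V : Finset (Site d)) {Λ : Finset (Site d)}
    (f : Cfg d Λ → ℝ) (η : Cfg d Λ) : ℝ :=
  ∑ ξ : Cfg d Λ, weight d q ξ * f (fun x => if (x : Site d) ∈ V then ξ x else η x)

/-- Conditional variance `Var_V(f)` of `f` with respect to the spins in `V`,
given the spins outside `V`. -/
noncomputable def condVar (d : ℕ) (q : ℝ) (V : Finset (Site d)) {Λ : Finset (Site d)}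
    (f : Cfg d Λ → ℝ) (η : Cfg d Λ) : ℝ :=
  condEx d q V (fun ζ => f ζ ^ 2) η - (condEx d q V f η) ^ 2

/-- The (total) variance of `f` under `π_Λ`. -/
noncomputable def variance (d : ℕ) (q : ℝ) {Λ : Finset (Site d)} (f : Cfg d Λ → ℝ) : ℝ :=
  mean d q (fun η => f η ^ 2) - (mean d q f) ^ 2

/-- The configuration on all of `ℤ^d` agreeing with `η` on `Λ` and with the boundary
condition `σ` outside of `Λ`. -/
def full (d : ℕ) {Λ : Finset (Site d)} (σ : Site d → Bool) (η : Cfg d Λ) (y : Site d) : Bool :=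
  if h : y ∈ Λ then η ⟨y, h⟩ else σ y

open Classical in
/-- The East-like constraint indicator `c_x^{Λ,σ}(η)`: it equals `1` iff the configuration
agreeing with `η` on `Λ` and with `σ` outside has a vacancy at `x - e_i` for some `i`. -/
noncomputable def cInd (d : ℕ) {Λ : Finset (Site d)} (σ : Site d → Bool) (x : Site d)
    (η : Cfg d Λ) : ℝ :=
  if ∃ i : Fin d, full d σ η (x - basis d i) = false then 1 else 0

/-- The Dirichlet form `D_Λ^σ(f) = Σ_{x∈Λ} π_Λ(c_x^{Λ,σ} · Var_x f)` of the East-like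
process on `Λ` with boundary condition `σ`. -/
noncomputable def dirichlet (d : ℕ) (q : ℝ) (Λ : Finset (Site d)) (σ : Site d → Bool)
    (f : Cfg d Λ → ℝ) : ℝ :=
  ∑ x ∈ Λ, mean d q (fun η => cInd d σ x η * condVar d q {x} f η)

/-- The spectral gap of the East-like process on `Λ` with boundary condition `σ`. -/
noncomputable def gap (d : ℕ) (q : ℝ) (Λ : Finset (Site d)) (σ : Site d → Bool) : ℝ :=
  sInf { r : ℝ | ∃ f : Cfg d Λ → ℝ, (∃ η η' : Cfg d Λ, f η ≠ f η') ∧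
    r = dirichlet d q Λ σ f / variance d q f }

/-- The relaxation time `T_rel^σ(Λ;q)`, the inverse of the spectral gap. -/
noncomputable def Trel (d : ℕ) (q : ℝ) (Λ : Finset (Site d)) (σ : Site d → Bool) : ℝ :=
  (gap d q Λ σ)⁻¹

/-- The cube `[1,L]^d`. -/
noncomputable def cube (d : ℕ) (L : ℕ) : Finset (Site d) := Finset.Icc (fun _ => 1) (fun _ => (L : ℤ))

/-- The maximal boundary condition: all boundary spins are vacancies. -/
def maxBC (d : ℕ) : Site d → Bool := fun _ => false

/-- The site `(0,1,…,1) = (1,…,1) - e_1`, carrying the vacancy of the (canonical)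
minimal boundary condition for the cube `[1,L]^d`. -/
def minVac (d : ℕ) : Site d := fun j => if (j : ℕ) = 0 then 0 else 1

/-- The minimal boundary condition for the cube `[1,L]^d`: a unique vacancy at
`(1,…,1) - e_1`. -/
def minBC (d : ℕ) : Site d → Bool := fun x => decide (x ≠ minVac d)

/-- `T_rel^max(L;q)`, relaxation time on `[1,L]^d` with maximal boundary conditions. -/
noncomputable def TrelMax (d : ℕ) (q : ℝ) (L : ℕ) : ℝ := Trel d q (cube d L) (maxBC d)

/-- `T_rel^min(L;q)`, relaxation time on `[1,L]^d` with minimal boundary conditions. -/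
noncomputable def TrelMin (d : ℕ) (q : ℝ) (L : ℕ) : ℝ := Trel d q (cube d L) (minBC d)

/-- `θ_q = log₂(1/q)`. -/
noncomputable def theta (q : ℝ) : ℝ := Real.logb 2 (1 / q)

/-- The East boundary `∂_E Λ` of a finite set `Λ ⊂ ℤ^d`. -/
def eastBoundary (d : ℕ) (Λ : Finset (Site d)) : Set (Site d) :=
  {x | x ∉ Λ ∧ ∃ i : Fin d, x + basis d i ∈ Λ}

end East

namespace East

/-- The gap `g_x(η)` of a site `x` in the configuration `η ∈ Ω_{[1,L]^d}` extended by
zeros on `∂_E Λ`: the least `g > 0` such that some `z ∈ Λ ∪ ∂_E Λ` with `z ≪ x`,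
`‖x - z‖₁ = g` carries a vacancy. -/
noncomputable def gapOf (d L : ℕ) (η : Cfg d (cube d L)) (x : Site d) : ℕ :=
  sInf { g : ℕ | 0 < g ∧ ∃ z : Site d,
    (z ∈ cube d L ∨ z ∈ eastBoundary d (cube d L)) ∧ z ≤ x ∧
    full d (maxBC d) η z = false ∧ (∑ i, (x i - z i).natAbs) = g }

/-- One stage of the deterministic dynamics: remove all vacancies with gap `g`. -/
noncomputable def phiStep (d L : ℕ) (g : ℕ) (η : Cfg d (cube d L)) : Cfg d (cube d L) :=
  fun y => if gapOf d L η (y : Site d) = g then true else η y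

/-- The deterministic dynamics `Φ_g`. -/
noncomputable def Phi (d L : ℕ) : ℕ → Cfg d (cube d L) → Cfg d (cube d L)
  | 0, η => η
  | g + 1, η => phiStep d L (g + 1) (Phi d L g η)

/-- The upper corner `v^* = (L,…,L)` of `[1,L]^d`. -/
def vstar (d L : ℕ) : Site d := fun _ => (L : ℤ)

/-- The configuration `𝟙0` with a unique vacancy, at `v^*`. -/
def oneZero (d L : ℕ) : Cfg d (cube d L) :=
  fun y => decide ((y : Site d) ≠ vstar d L)

/-- The bottleneck set `A_* = { η : Φ_{L-1}(η) = 𝟙0 }`. -/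
noncomputable def Astar (d L : ℕ) : Set (Cfg d (cube d L)) :=
  { η | Phi d L (L - 1) η = oneZero d L }

/-- The configuration `η` with the spin at `z` flipped. -/
def flipAt (d : ℕ) {Λ : Finset (Site d)} (η : Cfg d Λ) (z : Site d) : Cfg d Λ :=
  fun y => if (y : Site d) = z then !(η y) else η y

end East

/-!
Unless `a` lies on the East boundary (where its zero is permanent) or `η` has a zero in `B⁻`,
every zero of `η` below `a` is at distance at least `ℓ = ‖b - a‖₁`, so the zero at `a` survives
the deterministic dynamics up to stage `ℓ - 1`, in `η` and equally in `η^z`, since `z ∈ B`.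
A zero at `a` surviving that long removes any zero at `b` by stage `ℓ`. For `b = u_M = v^*`
this contradicts `Φ_{L-1}(η) = 𝟙0`, so `a` is a boundary site and (1) holds. For `k < M` the
spins at `u_k` at stage `d_{k+1} - 1` differ in `η` and `η^z`, so at most one of them is `1`,
which forces `d_{k+1} ≤ ℓ`; this is (3).
-/

namespace East

section

variable {d L : ℕ}

lemma full_eq_false_of_not_mem {ζ : Cfg d (cube d L)} {y : Site d} (h : y ∉ cube d L) :
    full d (maxBC d) ζ y = false := by
  simp [full, h, maxBC]

lemma full_of_mem {ζ : Cfg d (cube d L)} {y : Site d} (h : y ∈ cube d L) :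
    full d (maxBC d) ζ y = ζ ⟨y, h⟩ :=
  dif_pos h

lemma full_flipAt_of_ne {η : Cfg d (cube d L)} {z x : Site d} (hxz : x ≠ z) :
    full d (maxBC d) (flipAt d η z) x = full d (maxBC d) η x := by
  unfold full flipAt
  split_ifs <;> simp_all

lemma sum_natAbs_sub_pos {x y : Site d} (hxy : x < y) : 0 < ∑ j, (y j - x j).natAbs := by
  obtain ⟨-, j, hj⟩ := Pi.lt_def.1 hxy
  have := Finset.single_le_sum (f := fun j => (y j - x j).natAbs)
    (fun j _ => Nat.zero_le _) (Finset.mem_univ j)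
  omega

lemma not_mem_Icc_of_le {a b y : Site d} (hby : b ≤ y) (hy : 0 < ∑ j, (y j - b j).natAbs) :
    y ∉ Finset.Icc a b := fun h => by
  rw [le_antisymm (Finset.mem_Icc.1 h).2 hby] at hy
  simp at hy

def gapCandidates (ζ : Cfg d (cube d L)) (x : Site d) : Set ℕ :=
  { g : ℕ | 0 < g ∧ ∃ z : Site d,
    (z ∈ cube d L ∨ z ∈ eastBoundary d (cube d L)) ∧ z ≤ x ∧
    full d (maxBC d) ζ z = false ∧ (∑ i, (x i - z i).natAbs) = g }

lemma gapOf_le {ζ : Cfg d (cube d L)} {x : Site d} {g : ℕ} (hg : g ∈ gapCandidates ζ x) :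
    gapOf d L ζ x ≤ g :=
  Nat.sInf_le hg

lemma gapOf_mem_of_nonempty {ζ : Cfg d (cube d L)} {x : Site d}
    (h : (gapCandidates ζ x).Nonempty) : gapOf d L ζ x ∈ gapCandidates ζ x :=
  Nat.sInf_mem h

lemma gapOf_mem_of_pos {ζ : Cfg d (cube d L)} {x : Site d} (h : 0 < gapOf d L ζ x) :
    gapOf d L ζ x ∈ gapCandidates ζ x :=
  gapOf_mem_of_nonempty (Nat.nonempty_of_pos_sInf h)

lemma gapCandidates_mono {ζ ζ' : Cfg d (cube d L)}
    (h : ∀ x, full d (maxBC d) ζ' x = false → full d (maxBC d) ζ x = false) (y : Site d) :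
    gapCandidates ζ' y ⊆ gapCandidates ζ y := by
  rintro g ⟨hg, x, hx, hxy, hx0, rfl⟩
  exact ⟨hg, x, hx, hxy, h x hx0, rfl⟩

lemma full_Phi_succ_eq_false_iff {ξ : Cfg d (cube d L)} {s : ℕ} {y : Site d}
    (hy : y ∈ cube d L) :
    full d (maxBC d) (Phi d L (s + 1) ξ) y = false ↔
      gapOf d L (Phi d L s ξ) y ≠ s + 1 ∧ full d (maxBC d) (Phi d L s ξ) y = false := by
  rw [full_of_mem hy, full_of_mem hy]
  show phiStep d L (s + 1) (Phi d L s ξ) ⟨y, hy⟩ = false ↔ _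
  unfold phiStep
  split_ifs with h <;> simp [h]

lemma full_Phi_eq_false_of_succ {ξ : Cfg d (cube d L)} {s : ℕ} {y : Site d}
    (h : full d (maxBC d) (Phi d L (s + 1) ξ) y = false) :
    full d (maxBC d) (Phi d L s ξ) y = false := by
  by_cases hy : y ∈ cube d L
  · exact ((full_Phi_succ_eq_false_iff hy).1 h).2
  · exact full_eq_false_of_not_mem hy

lemma full_Phi_eq_false_of_le {ξ : Cfg d (cube d L)} {s t : ℕ} (hst : s ≤ t) {y : Site d}
    (h : full d (maxBC d) (Phi d L t ξ) y = false) :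
    full d (maxBC d) (Phi d L s ξ) y = false := by
  induction t, hst using Nat.le_induction with
  | base => exact h
  | succ t _ ih => exact ih (full_Phi_eq_false_of_succ h)

lemma gapCandidates_Phi_subset (ξ : Cfg d (cube d L)) (s : ℕ) (y : Site d) :
    gapCandidates (Phi d L s ξ) y ⊆ gapCandidates ξ y :=
  gapCandidates_mono (fun _ => full_Phi_eq_false_of_le (Nat.zero_le s)) y

lemma lt_of_mem_gapCandidates_Phi {ξ : Cfg d (cube d L)} {y : Site d} (hy : y ∈ cube d L) :
    ∀ s, full d (maxBC d) (Phi d L s ξ) y = false →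
      ∀ g ∈ gapCandidates (Phi d L s ξ) y, s < g := by
  intro s
  induction s with
  | zero => exact fun _ g hg => hg.1
  | succ s ih =>
    intro h g hg
    obtain ⟨hne, hzero⟩ := (full_Phi_succ_eq_false_iff hy).1 h
    have hg' : g ∈ gapCandidates (Phi d L s ξ) y :=
      gapCandidates_mono (fun _ => full_Phi_eq_false_of_succ) y hg
    have hsg := ih hzero g hg'
    have hgap := ih hzero _ (gapOf_mem_of_nonempty ⟨g, hg'⟩)
    have := gapOf_le hg'
    omega

/-- A zero still at `y` at stage `l - 1` would have gap exactly `l` there, and `φ_l` removes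
it. -/
lemma full_Phi_eq_true_of_zero_below {ξ : Cfg d (cube d L)} {x y : Site d} {l : ℕ}
    (hy : y ∈ cube d L) (hx : x ∈ cube d L ∨ x ∈ eastBoundary d (cube d L)) (hxy : x ≤ y)
    (hl : ∑ j, (y j - x j).natAbs = l) (hl0 : 0 < l)
    (hx0 : full d (maxBC d) (Phi d L (l - 1) ξ) x = false) :
    ∀ t, l ≤ t → full d (maxBC d) (Phi d L t ξ) y = true := by
  obtain ⟨s, rfl⟩ : ∃ s, l = s + 1 := ⟨l - 1, by omega⟩
  intro t hlt
  by_contra h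
  rw [Bool.not_eq_true] at h
  obtain ⟨hne, hzero⟩ := (full_Phi_succ_eq_false_iff hy).1 (full_Phi_eq_false_of_le hlt h)
  have hmem : s + 1 ∈ gapCandidates (Phi d L s ξ) y := ⟨s.succ_pos, x, hx, hxy, hx0, hl⟩
  have := lt_of_mem_gapCandidates_Phi hy s hzero _ (gapOf_mem_of_nonempty ⟨_, hmem⟩)
  have := gapOf_le hmem
  omega

lemma full_Phi_eq_false_of_le_gapCandidates {ξ : Cfg d (cube d L)} {y : Site d} {l : ℕ}
    (hy : y ∈ cube d L) (h0 : full d (maxBC d) ξ y = false)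
    (hgap : ∀ g ∈ gapCandidates ξ y, l ≤ g) :
    ∀ s < l, full d (maxBC d) (Phi d L s ξ) y = false := by
  intro s
  induction s with
  | zero => exact fun _ => h0
  | succ s ih =>
    intro hs
    refine (full_Phi_succ_eq_false_iff hy).2 ⟨fun heq => ?_, ih (by omega)⟩
    have := hgap _ (gapCandidates_Phi_subset ξ s y (gapOf_mem_of_pos (by omega)))
    omega

lemma le_of_full_Phi_ne {ξ ξ' : Cfg d (cube d L)} {x y : Site d} {l D : ℕ}
    (hy : y ∈ cube d L) (hx : x ∈ cube d L ∨ x ∈ eastBoundary d (cube d L)) (hxy : x ≤ y)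
    (hl : ∑ j, (y j - x j).natAbs = l) (hl0 : 0 < l)
    (hx0 : full d (maxBC d) (Phi d L (l - 1) ξ) x = false)
    (hx0' : full d (maxBC d) (Phi d L (l - 1) ξ') x = false)
    (hne : full d (maxBC d) (Phi d L (D - 1) ξ) y ≠ full d (maxBC d) (Phi d L (D - 1) ξ') y) :
    D ≤ l := by
  by_contra hlD
  apply hne
  rw [full_Phi_eq_true_of_zero_below hy hx hxy hl hl0 hx0 _ (by omega),
    full_Phi_eq_true_of_zero_below hy hx hxy hl hl0 hx0' _ (by omega)]

lemma false_of_zero_persists_below_vstar {η : Cfg d (cube d L)} (hη : η ∈ Astar d L)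
    {a : Site d} (ha : a ∈ cube d L) (hav : a ≤ vstar d L)
    (hl0 : 0 < ∑ j, (vstar d L j - a j).natAbs)
    (hpers : ∀ s < ∑ j, (vstar d L j - a j).natAbs, full d (maxBC d) (Phi d L s η) a = false) :
    False := by
  have hη' : Phi d L (L - 1) η = oneZero d L := hη
  have hv : vstar d L ∈ cube d L := Finset.mem_Icc.2 ⟨(Finset.mem_Icc.1 ha).1.trans hav, le_rfl⟩
  rcases le_or_gt (∑ j, (vstar d L j - a j).natAbs) (L - 1) with hlL | hLl
  · have := full_Phi_eq_true_of_zero_below hv (Or.inl ha) hav rfl hl0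
      (hpers _ (by omega)) _ hlL
    rw [hη', full_of_mem hv] at this
    simp [oneZero] at this
  · have := hpers (L - 1) hLl
    rw [hη', full_of_mem ha] at this
    simp only [oneZero, ne_eq, decide_eq_false_iff_not, not_not] at this
    simp [this] at hl0

/-- `ξ` has a zero in `B⁻` for the box `B = [a, b]`. -/
def HasZeroBelowBox (ξ : Cfg d (cube d L)) (a b : Site d) : Prop :=
  ∃ x : Site d, (x ∈ cube d L ∨ x ∈ eastBoundary d (cube d L)) ∧
    x ∉ Finset.Icc a b ∧ x ≤ a ∧
    (∑ j, (a j - x j).natAbs) < (∑ j, (b j - a j).natAbs) ∧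
    full d (maxBC d) ξ x = false

lemma hasZeroBelowBox_flipAt_iff {η : Cfg d (cube d L)} {a b z : Site d}
    (hz : z ∈ Finset.Icc a b) :
    HasZeroBelowBox (flipAt d η z) a b ↔ HasZeroBelowBox η a b := by
  refine exists_congr fun x => ⟨?_, ?_⟩ <;> rintro ⟨hx, hxB, hxa, hlt, hx0⟩
  · rw [full_flipAt_of_ne (ne_of_mem_of_not_mem hz hxB).symm] at hx0
    exact ⟨hx, hxB, hxa, hlt, hx0⟩
  · rw [← full_flipAt_of_ne (ne_of_mem_of_not_mem hz hxB).symm] at hx0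
    exact ⟨hx, hxB, hxa, hlt, hx0⟩

lemma full_Phi_corner_eq_false {ξ : Cfg d (cube d L)} {a b : Site d}
    (ha0 : full d (maxBC d) ξ a = false)
    (hno : ¬(a ∉ eastBoundary d (cube d L) ∧ HasZeroBelowBox ξ a b)) :
    ∀ s < ∑ j, (b j - a j).natAbs, full d (maxBC d) (Phi d L s ξ) a = false := by
  by_cases ha : a ∈ cube d L
  · refine full_Phi_eq_false_of_le_gapCandidates ha ha0 ?_
    rintro g ⟨hg, x, hx, hxa, hx0, rfl⟩
    by_contra hlt
    refine hno ⟨fun hbd => hbd.1 ha, x, hx, fun hxB => ?_, hxa, not_le.1 hlt, hx0⟩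
    obtain rfl : x = a := le_antisymm hxa (Finset.mem_Icc.1 hxB).1
    simp at hg
  · exact fun _ _ => full_eq_false_of_not_mem ha

lemma chain_dist_pos {M : ℕ} {u : ℕ → Site d}
    (hd1 : (∑ j, (u 1 j - u 0 j).natAbs) = 1)
    (hdinc : ∀ i, 1 ≤ i → i < M →
      (∑ j, (u i j - u (i - 1) j).natAbs) < ∑ j, (u (i + 1) j - u i j).natAbs) :
    ∀ i, 1 ≤ i → i ≤ M → 0 < ∑ j, (u i j - u (i - 1) j).natAbs := by
  intro i hi
  induction i, hi using Nat.le_induction with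
  | base => intro; rw [Nat.sub_self, hd1]; exact one_pos
  | succ i hi ih =>
    intro hiM
    have := hdinc i hi (by omega)
    have := ih (by omega)
    simp only [Nat.add_sub_cancel]
    omega

end

theorem east_bottleneck_alternative_general (d L : ℕ)
    (η : Cfg d (cube d L)) (hη : η ∈ Astar d L)
    (z : Site d)
    (M : ℕ) (u : ℕ → Site d) (huM : u M = vstar d L)
    (humem : ∀ i ≤ M, u i ∈ cube d L) (humono : ∀ i < M, u i ≤ u (i + 1))
    (hd1 : (∑ j, (u 1 j - u 0 j).natAbs) = 1)
    (hdinc : ∀ i, 1 ≤ i → i < M →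
      (∑ j, (u i j - u (i - 1) j).natAbs) < ∑ j, (u (i + 1) j - u i j).natAbs)
    (hprop : ∀ i, 1 ≤ i → i ≤ M →
      (∀ l < ∑ j, (u i j - u (i - 1) j).natAbs,
        full d (maxBC d) (Phi d L l η) (u i) = false ∧
        full d (maxBC d) (Phi d L l (flipAt d η z)) (u i) = false) ∧
      full d (maxBC d) (Phi d L (∑ j, (u i j - u (i - 1) j).natAbs) η) (u i) ≠
        full d (maxBC d)
          (Phi d L (∑ j, (u i j - u (i - 1) j).natAbs) (flipAt d η z)) (u i) ∧
      full d (maxBC d)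
          (Phi d L ((∑ j, (u i j - u (i - 1) j).natAbs) - 1) η) (u (i - 1)) ≠
        full d (maxBC d)
          (Phi d L ((∑ j, (u i j - u (i - 1) j).natAbs) - 1) (flipAt d η z)) (u (i - 1)))
    (aB bB : Site d)
    (hBsub : (Finset.Icc aB bB : Set (Site d)) ⊆
      ↑(cube d L) ∪ eastBoundary d (cube d L))
    (hzB : z ∈ Finset.Icc aB bB) (hza : z ≠ aB)
    (ha0 : full d (maxBC d) η aB = false)
    (k : ℕ) (hk : k ≤ M) (hbB : bB = u k) :
    (vstar d L ∈ Finset.Icc aB bB ∧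
      ∃ x ∈ Finset.Icc aB bB, x ∈ eastBoundary d (cube d L)) ∨
    (aB ∉ eastBoundary d (cube d L) ∧
      ∃ x : Site d, (x ∈ cube d L ∨ x ∈ eastBoundary d (cube d L)) ∧
        x ∉ Finset.Icc aB bB ∧ x ≤ aB ∧
        (∑ j, (aB j - x j).natAbs) < (∑ j, (bB j - aB j).natAbs) ∧
        full d (maxBC d) η x = false) ∨
    (k ≠ M ∧ (u (k + 1) ∈ cube d L ∨ u (k + 1) ∈ eastBoundary d (cube d L)) ∧
      u (k + 1) ∉ Finset.Icc aB bB ∧ bB ≤ u (k + 1) ∧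
      (∑ j, (u (k + 1) j - bB j).natAbs) ≤ (∑ j, (bB j - aB j).natAbs)) := by
  obtain ⟨hazB, hzbB⟩ := Finset.mem_Icc.1 hzB
  have hab : aB ≤ bB := hazB.trans hzbB
  have hl0 : 0 < ∑ j, (bB j - aB j).natAbs :=
    sum_natAbs_sub_pos ((lt_of_le_of_ne hazB (Ne.symm hza)).trans_le hzbB)
  have haB : aB ∈ cube d L ∨ aB ∈ eastBoundary d (cube d L) := by
    simpa using hBsub (Finset.left_mem_Icc.2 hab)
  by_cases h2 : aB ∉ eastBoundary d (cube d L) ∧ HasZeroBelowBox η aB bB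
  · exact Or.inr (Or.inl h2)
  have hpers : ∀ s < ∑ j, (bB j - aB j).natAbs,
      full d (maxBC d) (Phi d L s η) aB = false ∧
        full d (maxBC d) (Phi d L s (flipAt d η z)) aB = false := fun s hs =>
    ⟨full_Phi_corner_eq_false ha0 h2 s hs,
      full_Phi_corner_eq_false (by rwa [full_flipAt_of_ne (Ne.symm hza)])
        (by rwa [hasZeroBelowBox_flipAt_iff hzB]) s hs⟩
  rcases hk.lt_or_eq with hkM | rfl
  · have hD := chain_dist_pos hd1 hdinc (k + 1) (by omega) hkM
    have hne := (hprop (k + 1) (by omega) hkM).2.2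
    simp only [Nat.add_sub_cancel] at hD hne
    subst hbB
    exact Or.inr (Or.inr ⟨hkM.ne, Or.inl (humem _ hkM), not_mem_Icc_of_le (humono k hkM) hD,
      humono k hkM, le_of_full_Phi_ne (humem k hk) haB hab rfl hl0 (hpers _ (by omega)).1
        (hpers _ (by omega)).2 hne⟩)
  · rw [huM] at hbB
    subst hbB
    exact Or.inl ⟨Finset.right_mem_Icc.2 hab, aB, Finset.left_mem_Icc.2 hab,
      haB.resolve_left fun ha =>
        false_of_zero_persists_below_vstar hη ha hab hl0 fun s hs => (hpers s hs).1⟩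

/-- **geometric alternative along the bottleneck path.** Under the setup
of the structural lemma (η ∈ A_*, flip at `z` leaves `A_*`, and a chain `u_0,…,u_M` as
provided there), for every box `B = ∏[a_j,b_j]` with `B ⊂ Λ ∪ ∂_E Λ`, `z ∈ B`, `z ≠ a`,
`η_a = 0` (η extended by zeros) and `b = u_k` for some `0 ≤ k ≤ M`, at least one of the
following holds, where `ℓ = ‖B‖₁`:
(1) `v^* ∈ B` and `B ∩ ∂_E Λ ≠ ∅`;
(2) `a ∉ ∂_E Λ` and `η` has a vacancy in `B⁻ = {x ∈ Λ̄ ∖ B : x ≪ a, ‖x-a‖₁ < ℓ}`;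
(3) `k ≠ M` and `u_{k+1} ∈ B⁺ = {x ∈ Λ̄ ∖ B : b ≪ x, ‖x-b‖₁ ≤ ℓ}`. -/
theorem east_bottleneck_alternative (d L : ℕ) (hd : 1 ≤ d) (hL : 1 ≤ L)
    (η : Cfg d (cube d L)) (hη : η ∈ Astar d L)
    (z : Site d) (hz : z ∈ cube d L) (hzv : z ≠ vstar d L)
    (hc : cInd d (maxBC d) z η = 1) (hflip : flipAt d η z ∉ Astar d L)
    (M : ℕ) (u : ℕ → Site d) (hM : 1 ≤ M) (hu0 : u 0 = z) (huM : u M = vstar d L)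
    (humem : ∀ i ≤ M, u i ∈ cube d L) (humono : ∀ i < M, u i ≤ u (i + 1))
    (hd1 : (∑ j, (u 1 j - u 0 j).natAbs) = 1)
    (hdinc : ∀ i, 1 ≤ i → i < M →
      (∑ j, (u i j - u (i - 1) j).natAbs) < ∑ j, (u (i + 1) j - u i j).natAbs)
    (hdM : (∑ j, (u M j - u (M - 1) j).natAbs) < L)
    (hprop : ∀ i, 1 ≤ i → i ≤ M →
      (∀ l < ∑ j, (u i j - u (i - 1) j).natAbs,
        full d (maxBC d) (Phi d L l η) (u i) = false ∧
        full d (maxBC d) (Phi d L l (flipAt d η z)) (u i) = false) ∧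
      full d (maxBC d) (Phi d L (∑ j, (u i j - u (i - 1) j).natAbs) η) (u i) ≠
        full d (maxBC d)
          (Phi d L (∑ j, (u i j - u (i - 1) j).natAbs) (flipAt d η z)) (u i) ∧
      full d (maxBC d)
          (Phi d L ((∑ j, (u i j - u (i - 1) j).natAbs) - 1) η) (u (i - 1)) ≠
        full d (maxBC d)
          (Phi d L ((∑ j, (u i j - u (i - 1) j).natAbs) - 1) (flipAt d η z)) (u (i - 1)))
    (aB bB : Site d)
    (hBsub : (Finset.Icc aB bB : Set (Site d)) ⊆
      ↑(cube d L) ∪ eastBoundary d (cube d L))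
    (hzB : z ∈ Finset.Icc aB bB) (hza : z ≠ aB)
    (ha0 : full d (maxBC d) η aB = false)
    (k : ℕ) (hk : k ≤ M) (hbB : bB = u k) :
    (vstar d L ∈ Finset.Icc aB bB ∧
      ∃ x ∈ Finset.Icc aB bB, x ∈ eastBoundary d (cube d L)) ∨
    (aB ∉ eastBoundary d (cube d L) ∧
      ∃ x : Site d, (x ∈ cube d L ∨ x ∈ eastBoundary d (cube d L)) ∧
        x ∉ Finset.Icc aB bB ∧ x ≤ aB ∧
        (∑ j, (aB j - x j).natAbs) < (∑ j, (bB j - aB j).natAbs) ∧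
        full d (maxBC d) η x = false) ∨
    (k ≠ M ∧ (u (k + 1) ∈ cube d L ∨ u (k + 1) ∈ eastBoundary d (cube d L)) ∧
      u (k + 1) ∉ Finset.Icc aB bB ∧ bB ≤ u (k + 1) ∧
      (∑ j, (u (k + 1) j - bB j).natAbs) ≤ (∑ j, (bB j - aB j).natAbs)) :=
  east_bottleneck_alternative_general d L η hη z M u huM humem humono hd1 hdinc hprop aB bB hBsub
    hzB hza ha0 k hk hbB

end East
end

section
/- (Combinatorics of East-like paths: maximal range of a vacancy with at most m vacancies.) Fix d ≥ 1 and m ≥ 1. (a) For every η ∈ V_m and every x ∈ ℤ_+^d with η_x = 0 one has ‖x − x_*‖₁ + 1 ≤ 2^m − 1, and this bound is attained: there exist η ∈ V_m and x ∈ ℤ_+^d with η_x = 0 and ‖x − x_*‖₁ + 1 = 2^m − 1. (b) For every η ∈ V_m having exactly one vacancy, located at x, one has ‖x − x_*‖₁ + 1 ≤ 2^{m−1}, and there exists such an η attaining equality. -/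
open scoped BigOperators

namespace East

/-- All sites in `V` lie in `ℤ_+^d`. -/
def posCfg (d : ℕ) (V : Finset (Site d)) : Prop := ∀ x ∈ V, ∀ i, 1 ≤ x i

/-- The corner `x_* = (1,…,1)` of `ℤ_+^d`. -/
def xstar (d : ℕ) : Site d := fun _ => 1

/-- A single legal East-like move (with minimal boundary conditions, i.e. a frozen
vacancy at `x_* - e_1`) between vacancy sets `V, W ⊂ ℤ_+^d`, keeping at most `m`
vacancies: the value at some `x ∈ ℤ_+^d` is flipped, `x` being either `x_*` or such that
`x - e_i ∈ ℤ_+^d` is a vacancy of `V` for some `i`. -/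
def legalStep (d m : ℕ) (V W : Finset (Site d)) : Prop :=
  posCfg d V ∧ posCfg d W ∧ V.card ≤ m ∧ W.card ≤ m ∧
  ∃ x : Site d, (∀ i, 1 ≤ x i) ∧
    (x = xstar d ∨ ∃ i : Fin d, (∀ j, 1 ≤ (x - basis d i) j) ∧ (x - basis d i) ∈ V) ∧
    ((x ∈ V ∧ W = V.erase x) ∨ (x ∉ V ∧ W = insert x V))

/-- `V ∈ V_m`: the vacancy set `V` is reachable from the configuration `𝟙` (no
vacancies) by a path of legal East-like moves all of whose configurations have at most
`m` vacancies. -/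
def Vreach (d m : ℕ) (V : Finset (Site d)) : Prop :=
  Relation.ReflTransGen (legalStep d m) ∅ V

/-!
Let `level x = ‖x - x_*‖₁`. A move at `x` needs `x = x_*` (level `0`) or a vacancy at level
`level x - 1`, so the set of levels of the vacancies performs a one-dimensional East process on
`ℕ` with at most `m` vacancies; along a coordinate axis this reduction is exact, so both bounds
and their sharpness are questions about the half-line.

On `ℕ`, a vacancy `x > 0` was created next to one at `x - 1`, and while `x` stays, the part of
the configuration below `x` uses at most `m - 1` vacancies. Reversing that part shows that the
leftmost vacancy of anything reachable with `m` vacancies lies below `2^(m-1)`. Hence the part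
of the configuration beyond `2^(m-1)` is itself, shifted by `2^(m-1)`, an East process with
`m - 1` vacancies, and induction gives the bound `2^m - 2` on all positions. Conversely, a
vacancy reaches `2^k - 1` with `k + 1` vacancies by bringing one to `t = 2^(k-1) - 1`, repeating
the construction from `t + 1` with `t` as new root, and undoing the first phase.
-/

open Relation Finset

namespace Line

/-- The East model on the half-line `ℕ`: site `0` is always flippable (it is the image of `x_*`
under `level`) and `n > 0` needs a vacancy at `n - 1`; the truncated `n - 1` is harmless since
`n = 0` is the first alternative. -/
def AddsVacancy (A B : Finset ℕ) : Prop :=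
  ∃ n ∉ A, (n = 0 ∨ n - 1 ∈ A) ∧ B = insert n A

def Step (m : ℕ) (A B : Finset ℕ) : Prop :=
  #A ≤ m ∧ #B ≤ m ∧ (AddsVacancy A B ∨ AddsVacancy B A)

abbrev Reach (m : ℕ) : Finset ℕ → Finset ℕ → Prop := ReflTransGen (Step m)

variable {m m' : ℕ} {A B C D : Finset ℕ}

theorem Step.symm (h : Step m A B) : Step m B A :=
  ⟨h.2.1, h.1, h.2.2.symm⟩

theorem Reach.symm (h : Reach m A B) : Reach m B A := by
  induction h with
  | refl => rfl
  | tail _ hst ih => exact ih.head hst.symm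

theorem Reach.mono (hm : m ≤ m') (h : Reach m A B) : Reach m' A B :=
  ReflTransGen.mono (fun _ _ hst => ⟨hst.1.trans hm, hst.2.1.trans hm, hst.2.2⟩) _ _ h

theorem Reach.card_le (h : Reach m A B) (hA : #A ≤ m) : #B ≤ m := by
  rcases h.cases_tail with rfl | ⟨_, _, hst⟩
  · exact hA
  · exact hst.2.1

theorem reach_of_eq_or_addsVacancy (hC : #C ≤ m) (hD : #D ≤ m) (h : C = D ∨ AddsVacancy C D) :
    Reach m C D ∧ Reach m D C := by
  rcases h with rfl | h
  · exact ⟨.refl, .refl⟩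
  · exact ⟨.single ⟨hC, hD, .inl h⟩, .single ⟨hD, hC, .inr h⟩⟩

theorem Step.map {f : Finset ℕ → Finset ℕ}
    (hf : ∀ C D, AddsVacancy C D → f C = f D ∨ AddsVacancy (f C) (f D))
    (h : Step m C D) (hC : #(f C) ≤ m') (hD : #(f D) ≤ m') : Reach m' (f C) (f D) := by
  rcases h.2.2 with h | h
  · exact (reach_of_eq_or_addsVacancy hC hD (hf _ _ h)).1
  · exact (reach_of_eq_or_addsVacancy hD hC (hf _ _ h)).2

theorem Reach.map {f : Finset ℕ → Finset ℕ}
    (hf : ∀ C D, AddsVacancy C D → f C = f D ∨ AddsVacancy (f C) (f D))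
    (hcard : ∀ C, Reach m A C → #(f C) ≤ m') (h : Reach m A B) : Reach m' (f A) (f B) := by
  induction h with
  | refl => rfl
  | @tail C D hAC hCD ih =>
    exact ih.trans (hCD.map hf (hcard C hAC) (hcard D (hAC.tail hCD)))

theorem addsVacancy_filter_lt (c : ℕ) (h : AddsVacancy C D) :
    C.filter (· < c) = D.filter (· < c) ∨ AddsVacancy (C.filter (· < c)) (D.filter (· < c)) := by
  obtain ⟨n, hnC, hlegal, rfl⟩ := h
  by_cases hn : n < c
  · refine .inr ⟨n, by simp [hnC], ?_, by rw [filter_insert, if_pos hn]⟩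
    rcases hlegal with h | h
    · exact .inl h
    · exact .inr (mem_filter.2 ⟨h, by omega⟩)
  · exact .inl (by rw [filter_insert, if_neg hn])

def shiftDown (c : ℕ) (A : Finset ℕ) : Finset ℕ :=
  (A.filter (c ≤ ·)).image (· - c)

@[simp]
theorem mem_shiftDown {c n : ℕ} : n ∈ shiftDown c A ↔ c + n ∈ A := by
  simp only [shiftDown, mem_image, mem_filter]
  constructor
  · rintro ⟨a, ⟨ha, hca⟩, rfl⟩
    rwa [Nat.add_sub_cancel' hca]
  · exact fun h => ⟨c + n, ⟨h, Nat.le_add_right c n⟩, by omega⟩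

@[simp]
theorem shiftDown_empty (c : ℕ) : shiftDown c ∅ = ∅ := by ext; simp

theorem card_shiftDown_lt {c k : ℕ} (hk : k ∈ A) (hkc : k < c) : #(shiftDown c A) < #A :=
  (card_le_card_of_injOn (c + ·)
    (fun n hn => mem_erase.2 ⟨(by omega : c + n ≠ k), mem_shiftDown.1 hn⟩)
    (add_right_injective c).injOn).trans_lt (card_erase_lt_of_mem hk)

theorem addsVacancy_shiftDown (c : ℕ) (h : AddsVacancy C D) :
    shiftDown c C = shiftDown c D ∨ AddsVacancy (shiftDown c C) (shiftDown c D) := by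
  obtain ⟨n, hnC, hlegal, rfl⟩ := h
  by_cases hn : c ≤ n
  · refine .inr ⟨n - c, by simpa [Nat.add_sub_cancel' hn] using hnC, ?_, ?_⟩
    · rcases Nat.eq_or_lt_of_le hn with rfl | hlt
      · exact .inl (Nat.sub_self c)
      · refine .inr (mem_shiftDown.2 ?_)
        rcases hlegal with h | h
        · omega
        · convert h using 1; omega
    · ext k
      simp only [mem_shiftDown, mem_insert]
      exact or_congr_left (by omega)
  · refine .inl (ext fun k => ?_)
    simp only [mem_shiftDown, mem_insert]
    exact (or_iff_right (by omega)).symm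

/-- `A` moved to start at `t + 1`, together with a vacancy at `t` that serves as its new root. -/
def shiftUp (t : ℕ) (A : Finset ℕ) : Finset ℕ :=
  insert t (A.map (addLeftEmbedding (t + 1)))

theorem mem_shiftUp {t n : ℕ} : n ∈ shiftUp t A ↔ n = t ∨ t < n ∧ n - (t + 1) ∈ A := by
  simp only [shiftUp, mem_insert, mem_map, addLeftEmbedding_apply]
  refine or_congr_right ⟨?_, fun ⟨hn, h⟩ => ⟨_, h, by omega⟩⟩
  rintro ⟨a, ha, rfl⟩
  exact ⟨by omega, by simpa using ha⟩

@[simp]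
theorem shiftUp_empty (t : ℕ) : shiftUp t ∅ = {t} := by simp [shiftUp]

theorem card_shiftUp (t : ℕ) (A : Finset ℕ) : #(shiftUp t A) = #A + 1 := by
  rw [shiftUp, card_insert_of_notMem (by simp; omega), card_map]

theorem addsVacancy_shiftUp (t : ℕ) (h : AddsVacancy C D) :
    AddsVacancy (shiftUp t C) (shiftUp t D) := by
  obtain ⟨n, hnC, hlegal, rfl⟩ := h
  refine ⟨t + 1 + n, fun h => hnC ?_, .inr (mem_shiftUp.2 ?_), ?_⟩
  · simpa using ((mem_shiftUp.1 h).resolve_left (by omega)).2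
  · rcases Nat.eq_zero_or_pos n with rfl | hn
    · exact .inl (by omega)
    · refine .inr ⟨by omega, ?_⟩
      rw [show t + 1 + n - 1 - (t + 1) = n - 1 by omega]
      exact hlegal.resolve_left hn.ne'
  · ext k
    simp only [mem_shiftUp, mem_insert]
    by_cases hk : k - (t + 1) ∈ C <;>
      simp only [hk, or_true, or_false, and_true, and_false] <;> omega

theorem addsVacancy_insert (a : ℕ) (h : AddsVacancy C D) :
    insert a C = insert a D ∨ AddsVacancy (insert a C) (insert a D) := by
  obtain ⟨n, hnC, hlegal, rfl⟩ := h
  by_cases hn : n = a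
  · exact .inl (by rw [hn, insert_idem])
  · exact .inr ⟨n, by simp [hn, hnC], hlegal.imp_right (mem_insert_of_mem ·), insert_comm _ _ _⟩

theorem card_filter_lt_le {x : ℕ} (hx : x ∈ C) (hC : #C ≤ m + 1) :
    #(C.filter (· < x)) ≤ m := by
  have := card_lt_card (filter_ssubset (p := (· < x)).2 ⟨x, hx, lt_irrefl x⟩)
  omega

/-- Follow the path from the last creation of `x`: that move needed a vacancy at `x - 1`, and from
then on `x` is present, so the part of the configuration below `x` has at most `m` vacancies. -/
theorem exists_reach_filter_lt {x : ℕ} (hC : Reach (m + 1) ∅ C) (hx : x ∈ C) (hx0 : x ≠ 0) :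
    ∃ D, x - 1 ∈ D ∧ Reach m D (C.filter (· < x)) := by
  induction hC with
  | refl => simp at hx
  | @tail B C _ hBC ih =>
    by_cases hxB : x ∈ B
    · obtain ⟨D, hxD, hDB⟩ := ih hxB
      exact ⟨D, hxD, hDB.trans (hBC.map (fun _ _ => addsVacancy_filter_lt x)
        (card_filter_lt_le hxB hBC.1) (card_filter_lt_le hx hBC.2.1))⟩
    rcases hBC.2.2 with ⟨n, -, hlegal, rfl⟩ | ⟨n, -, -, rfl⟩
    · obtain rfl : x = n := by simpa [hxB] using hx
      refine ⟨B.filter (· < x), mem_filter.2 ⟨hlegal.resolve_left hx0, by omega⟩, ?_⟩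
      rw [filter_insert, if_neg (lt_irrefl x)]
    · exact absurd (mem_insert_of_mem hx) hxB

theorem exists_lt_two_pow_of_bound (hbound : ∀ D, Reach m ∅ D → ∀ n ∈ D, n + 2 ≤ 2 ^ m)
    (hA : Reach (m + 1) ∅ A) (hne : A.Nonempty) : ∃ k ∈ A, k < 2 ^ m := by
  refine ⟨A.min' hne, min'_mem A hne, ?_⟩
  rcases eq_or_ne (A.min' hne) 0 with h0 | h0
  · exact h0 ▸ Nat.two_pow_pos m
  obtain ⟨D, hD, hDA⟩ := exists_reach_filter_lt hA (min'_mem A hne) h0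
  have hempty : A.filter (· < A.min' hne) = ∅ :=
    filter_eq_empty_iff.2 fun a ha => not_lt.2 (min'_le A a ha)
  have := hbound D (hempty ▸ hDA).symm _ hD
  omega

theorem add_two_le_two_pow (h : Reach m ∅ A) : ∀ n ∈ A, n + 2 ≤ 2 ^ m := by
  induction m generalizing A with
  | zero =>
    have := h.card_le (by simp)
    simp_all
  | succ m ih =>
    have hshift : Reach m ∅ (shiftDown (2 ^ m) A) := by
      refine shiftDown_empty (2 ^ m) ▸ h.map (fun _ _ => addsVacancy_shiftDown _) fun C hC => ?_
      rcases C.eq_empty_or_nonempty with rfl | hne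
      · simp
      obtain ⟨k, hk, hkm⟩ := exists_lt_two_pow_of_bound (fun _ => ih) hC hne
      have := card_shiftDown_lt hk hkm
      have := hC.card_le (by simp)
      omega
    intro n hn
    rw [pow_succ]
    by_cases hnm : n < 2 ^ m
    · omega
    · have hn' : n - 2 ^ m ∈ shiftDown (2 ^ m) A := by
        rwa [mem_shiftDown, Nat.add_sub_cancel' (not_lt.1 hnm)]
      have := ih hshift _ hn'
      omega

theorem exists_lt_two_pow (h : Reach (m + 1) ∅ A) (hne : A.Nonempty) : ∃ k ∈ A, k < 2 ^ m :=
  exists_lt_two_pow_of_bound (fun _ => add_two_le_two_pow) h hne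

theorem Reach.shiftUp (t : ℕ) (h : Reach m ∅ A) : Reach (m + 1) {t} (shiftUp t A) :=
  shiftUp_empty t ▸ h.map (fun _ _ hCD => .inr (addsVacancy_shiftUp t hCD))
    fun C hC => (card_shiftUp t C).trans_le (Nat.add_le_add_right (hC.card_le (by simp)) 1)

theorem reach_singleton_two_pow_sub_one (k : ℕ) : Reach (k + 1) ∅ {2 ^ k - 1} := by
  induction k with
  | zero => exact .single ⟨by simp, by simp, .inl ⟨0, by simp, .inl rfl, rfl⟩⟩
  | succ k ih =>
    set t := 2 ^ k - 1
    have ht : 2 ^ (k + 1) - 1 = t + 1 + t := by rw [pow_succ]; have := Nat.two_pow_pos k; omega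
    have hup : shiftUp t {t} = insert (t + 1 + t) {t} := by
      ext n; simp only [mem_shiftUp, mem_insert, mem_singleton]; omega
    -- the vacancy at `t + 1 + t` lies beyond anything reachable with `k + 1` vacancies
    have hfar : ∀ C, Reach (k + 1) ∅ C → #(insert (t + 1 + t) C) ≤ k + 2 := fun C hC => by
      have hnot : t + 1 + t ∉ C := fun hmem => by
        have := add_two_le_two_pow hC _ hmem
        omega
      rw [card_insert_of_notMem hnot]
      exact Nat.add_le_add_right (hC.card_le (by simp)) 1
    have hdrop : Reach (k + 2) (insert (t + 1 + t) {t}) {t + 1 + t} :=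
      (ih.map (fun _ _ => addsVacancy_insert (t + 1 + t)) hfar).symm
    rw [ht]
    exact ((ih.mono (k + 1).le_succ).trans (hup ▸ ih.shiftUp t)).trans hdrop

theorem exists_reach_two_pow_sub_two (k : ℕ) :
    ∃ A, Reach (k + 1) ∅ A ∧ 2 ^ (k + 1) - 2 ∈ A := by
  induction k with
  | zero => exact ⟨{0}, reach_singleton_two_pow_sub_one 0, by simp⟩
  | succ k ih =>
    obtain ⟨A, hA, hmem⟩ := ih
    refine ⟨shiftUp (2 ^ (k + 1) - 1) A,
      (reach_singleton_two_pow_sub_one (k + 1)).trans (hA.shiftUp _), mem_shiftUp.2 (.inr ?_)⟩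
    have := Nat.two_pow_pos k
    simp only [pow_succ] at hmem ⊢
    exact ⟨by omega, by convert hmem using 1; omega⟩

end Line

section Lattice

variable {d m : ℕ}

def level (x : Site d) : ℕ := ∑ i, (x i - 1).natAbs

theorem level_xstar : level (xstar d) = 0 := by simp [level, xstar]

theorem level_sub_basis {x : Site d} {i : Fin d} (h : ∀ j, 1 ≤ (x - basis d i) j) :
    level (x - basis d i) + 1 = level x := by
  have hxi := h i
  simp only [level, ← Finset.sum_erase_add _ _ (mem_univ i)]
  rw [Finset.sum_congr rfl fun j hj =>
    show ((x - basis d i) j - 1).natAbs = (x j - 1).natAbs by simp [basis, ne_of_mem_erase hj]]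
  simp only [basis, Pi.sub_apply, if_true] at hxi ⊢
  omega

theorem sub_basis_ne (x : Site d) (i : Fin d) : x - basis d i ≠ x := fun h => by
  simpa [basis] using congrFun h i

def AddsVacancy (V W : Finset (Site d)) : Prop :=
  ∃ x ∉ V, (∀ i, 1 ≤ x i) ∧
    (x = xstar d ∨ ∃ i, (∀ j, 1 ≤ (x - basis d i) j) ∧ x - basis d i ∈ V) ∧ W = insert x V

theorem legalStep_iff {V W : Finset (Site d)} :
    legalStep d m V W ↔ posCfg d V ∧ posCfg d W ∧ #V ≤ m ∧ #W ≤ m ∧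
      (AddsVacancy V W ∨ AddsVacancy W V) := by
  refine and_congr_right' (and_congr_right' (and_congr_right' (and_congr_right' ⟨?_, ?_⟩)))
  · rintro ⟨x, hx, hlegal, ⟨hxV, rfl⟩ | ⟨hxV, rfl⟩⟩
    · refine .inr ⟨x, by simp, hx, ?_, (insert_erase hxV).symm⟩
      exact hlegal.imp_right fun ⟨i, hi, hmem⟩ => ⟨i, hi, mem_erase.2 ⟨sub_basis_ne x i, hmem⟩⟩
    · exact .inl ⟨x, hxV, hx, hlegal, rfl⟩
  · rintro (⟨x, hxV, hx, hlegal, rfl⟩ | ⟨x, hxW, hx, hlegal, rfl⟩)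
    · exact ⟨x, hx, hlegal, .inr ⟨hxV, rfl⟩⟩
    · refine ⟨x, hx, ?_, .inl ⟨mem_insert_self x W, (erase_insert hxW).symm⟩⟩
      exact hlegal.imp_right fun ⟨i, hi, hmem⟩ => ⟨i, hi, mem_insert_of_mem hmem⟩

theorem AddsVacancy.image_level {V W : Finset (Site d)} (h : AddsVacancy V W) :
    V.image level = W.image level ∨ Line.AddsVacancy (V.image level) (W.image level) := by
  obtain ⟨x, -, -, hlegal, rfl⟩ := h
  rw [image_insert]
  by_cases hx : level x ∈ V.image level
  · exact .inl (insert_eq_of_mem hx).symm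
  refine .inr ⟨level x, hx, ?_, rfl⟩
  rcases hlegal with rfl | ⟨i, hi, hmem⟩
  · exact .inl level_xstar
  · rw [← level_sub_basis hi, Nat.add_sub_cancel]
    exact .inr (mem_image_of_mem _ hmem)

theorem Vreach.reach_image_level {V : Finset (Site d)} (h : Vreach d m V) :
    Line.Reach m ∅ (V.image level) := by
  have hstep (U W : Finset (Site d)) (hUW : legalStep d m U W) :
      Line.Reach m (U.image level) (W.image level) := by
    obtain ⟨-, -, hU, hW, hadd⟩ := legalStep_iff.1 hUW
    have hU' : #(U.image level) ≤ m := card_image_le.trans hU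
    have hW' : #(W.image level) ≤ m := card_image_le.trans hW
    rcases hadd with hadd | hadd
    · exact (Line.reach_of_eq_or_addsVacancy hU' hW' hadd.image_level).1
    · exact (Line.reach_of_eq_or_addsVacancy hW' hU' hadd.image_level).2
  exact ReflTransGen.lift' _ hstep _ _ h

def axis (i : Fin d) : ℕ ↪ Site d :=
  ⟨fun n => xstar d + (n : ℤ) • basis d i, fun a b h => by simpa [basis] using congrFun h i⟩

theorem axis_apply (i j : Fin d) (n : ℕ) : axis i n j = if j = i then (n : ℤ) + 1 else 1 := by
  by_cases h : j = i <;> simp [axis, xstar, basis, h, add_comm]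

theorem axis_pos (i : Fin d) (n : ℕ) (j : Fin d) : 1 ≤ axis i n j := by
  rw [axis_apply]; split_ifs <;> omega

theorem level_axis (i : Fin d) (n : ℕ) : level (axis i n) = n := by
  have h (j : Fin d) : (axis i n j - 1).natAbs = if j = i then n else 0 := by
    rw [axis_apply]; split_ifs <;> simp
  simp [level, h]

theorem axis_sub_basis (i : Fin d) (n : ℕ) : axis i (n + 1) - basis d i = axis i n := by
  ext j; simp only [Pi.sub_apply, axis_apply, basis]; split_ifs <;> simp

theorem addsVacancy_map_axis (i : Fin d) {A B : Finset ℕ} (h : Line.AddsVacancy A B) :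
    AddsVacancy (A.map (axis i)) (B.map (axis i)) := by
  obtain ⟨n, hnA, hlegal, rfl⟩ := h
  refine ⟨axis i n, by simpa using hnA, axis_pos i n, ?_, map_insert _ _ _⟩
  rcases Nat.eq_zero_or_pos n with rfl | hn
  · left; ext j; simp [axis_apply, xstar]
  · obtain ⟨n, rfl⟩ : ∃ k, n = k + 1 := ⟨n - 1, by omega⟩
    refine .inr ⟨i, by rw [axis_sub_basis]; exact axis_pos i n, ?_⟩
    rw [axis_sub_basis]
    exact mem_map_of_mem _ (by simpa using hlegal)

theorem vreach_map_axis (i : Fin d) {A : Finset ℕ} (h : Line.Reach m ∅ A) :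
    Vreach d m (A.map (axis i)) := by
  have hpos : ∀ C : Finset ℕ, posCfg d (C.map (axis i)) := fun C x hx => by
    obtain ⟨n, -, rfl⟩ := mem_map.1 hx
    exact axis_pos i n
  have := ReflTransGen.lift (Finset.map (axis i)) (fun C D ⟨hC, hD, hadd⟩ =>
    legalStep_iff.2 ⟨hpos C, hpos D, by simpa using hC, by simpa using hD,
      hadd.imp (addsVacancy_map_axis i) (addsVacancy_map_axis i)⟩) _ _ h
  simpa [Vreach, Function.onFun] using this

end Lattice

/-- **combinatorics of East-like paths.**
(a) Every vacancy `x` of every `η ∈ V_m` satisfies `‖x - x_*‖₁ + 1 ≤ 2^m − 1`, and this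
bound is attained. (b) If `η ∈ V_m` has exactly one vacancy `x`, then
`‖x - x_*‖₁ + 1 ≤ 2^{m-1}`, and this bound is attained. -/
theorem east_path_combinatorics (d m : ℕ) (hd : 1 ≤ d) (hm : 1 ≤ m) :
    (∀ V : Finset (Site d), Vreach d m V → ∀ x ∈ V,
      (∑ i, (x i - 1).natAbs) + 1 ≤ 2 ^ m - 1) ∧
    (∃ V : Finset (Site d), ∃ x ∈ V, Vreach d m V ∧
      (∑ i, (x i - 1).natAbs) + 1 = 2 ^ m - 1) ∧
    (∀ V : Finset (Site d), Vreach d m V → V.card = 1 → ∀ x ∈ V,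
      (∑ i, (x i - 1).natAbs) + 1 ≤ 2 ^ (m - 1)) ∧
    (∃ x : Site d, Vreach d m {x} ∧ (∑ i, (x i - 1).natAbs) + 1 = 2 ^ (m - 1)) := by
  obtain ⟨k, rfl⟩ : ∃ k, m = k + 1 := ⟨m - 1, by omega⟩
  have hpow : 2 ^ (k + 1) = 2 * 2 ^ k := pow_succ' 2 k
  have hpos := Nat.two_pow_pos k
  let i : Fin d := ⟨0, hd⟩
  simp only [Nat.add_sub_cancel]
  refine ⟨fun V hV x hx => ?_, ?_, fun V hV hcard x hx => ?_, ?_⟩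
  · have := Line.add_two_le_two_pow hV.reach_image_level (level x) (mem_image_of_mem _ hx)
    change level x + 1 ≤ _
    omega
  · obtain ⟨A, hA, hmem⟩ := Line.exists_reach_two_pow_sub_two k
    refine ⟨_, axis i _, mem_map_of_mem _ hmem, vreach_map_axis i hA, ?_⟩
    change level _ + 1 = _
    rw [level_axis]
    omega
  · obtain ⟨y, rfl⟩ := card_eq_one.1 hcard
    obtain rfl := mem_singleton.1 hx
    obtain ⟨l, hl, hlt⟩ := Line.exists_lt_two_pow hV.reach_image_level (by simp)
    rw [image_singleton, mem_singleton] at hl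
    change level x + 1 ≤ _
    omega
  · refine ⟨axis i (2 ^ k - 1), by
      simpa using vreach_map_axis i (Line.reach_singleton_two_pow_sub_one k), ?_⟩
    change level _ + 1 = _
    rw [level_axis]
    omega

end East
end
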